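/- Let f: ℝⁿ → ℝ be μ-strongly convex with L-Lipschitz gradient and minimizer x*. The gradient descent iteration with step size ε = 2/(μ+L) satisfies ‖x_k − x*‖ ≤ ((L−μ)/(L+μ))^k ‖x_0 − x*‖ for all k ∈ ℤ⁺. -/

import Mathlib

open scoped RealInnerProductSpace

section Aux

variable {E : Type*} [NormedAddCommGroup E] [InnerProductSpace ℝ E] [CompleteSpace E]

/-- Descent lemma: Lipschitz gradient gives quadratic upper bound. -/
lemma my_descent (L : ℝ) (hL : 0 ≤ L) (f : E → ℝ) (f' : E → E)
    (hgrad : ∀ x, HasGradientAt f (f' x) x)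
    (hlip : ∀ x y, ‖f' x - f' y‖ ≤ L * ‖x - y‖) (x y : E) :
    f y ≤ f x + ⟪f' x, y - x⟫ + L / 2 * ‖y - x‖ ^ 2 := by
  set v := y - x with hv
  set φ : ℝ → ℝ := fun t => f (x + t • v) - t * ⟪f' x, v⟫ - L * t ^ 2 / 2 * ‖v‖ ^ 2 with hφ
  have hd : ∀ t : ℝ, HasDerivAt φ (⟪f' (x + t • v), v⟫ - ⟪f' x, v⟫ - L * t * ‖v‖ ^ 2) t := by
    intro t
    have hc : HasDerivAt (fun t : ℝ => x + t • v) v t := by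
      simpa using ((hasDerivAt_id t).smul_const v).const_add x
    have h1 : HasDerivAt (fun t : ℝ => f (x + t • v)) ⟪f' (x + t • v), v⟫ t := by
      have h := (hgrad (x + t • v)).hasFDerivAt.comp_hasDerivAt t hc
      simpa [InnerProductSpace.toDual_apply_apply, Function.comp_def] using h
    have h2 : HasDerivAt (fun t : ℝ => t * ⟪f' x, v⟫) ⟪f' x, v⟫ t := by
      simpa using (hasDerivAt_id t).mul_const (⟪f' x, v⟫)
    have h3 : HasDerivAt (fun t : ℝ => L * t ^ 2 / 2 * ‖v‖ ^ 2) (L * t * ‖v‖ ^ 2) t := by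
      have h := (((hasDerivAt_pow 2 t).const_mul L).div_const 2).mul_const (‖v‖ ^ 2)
      convert h using 1
      all_goals try rfl
      ring
    exact (h1.sub h2).sub h3
  have hmono : AntitoneOn φ (Set.Icc (0:ℝ) 1) := by
    apply antitoneOn_of_deriv_nonpos (convex_Icc 0 1)
    · exact fun t _ => (hd t).continuousAt.continuousWithinAt
    · exact fun t _ => (hd t).differentiableAt.differentiableWithinAt
    · intro t ht
      rw [interior_Icc] at ht
      rw [(hd t).deriv]
      have h1 : ⟪f' (x + t • v), v⟫ - ⟪f' x, v⟫ = ⟪f' (x + t • v) - f' x, v⟫ := by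
        rw [inner_sub_left]
      have h2 : ⟪f' (x + t • v) - f' x, v⟫ ≤ ‖f' (x + t • v) - f' x‖ * ‖v‖ :=
        real_inner_le_norm _ _
      have h3 : ‖f' (x + t • v) - f' x‖ ≤ L * (t * ‖v‖) := by
        have := hlip (x + t • v) x
        have hnorm : ‖x + t • v - x‖ = t * ‖v‖ := by
          rw [add_sub_cancel_left, norm_smul, Real.norm_eq_abs, abs_of_pos ht.1]
        rwa [hnorm] at this
      nlinarith [norm_nonneg v, norm_nonneg (f' (x + t • v) - f' x)]
  have h01 := hmono (Set.left_mem_Icc.2 zero_le_one) (Set.right_mem_Icc.2 zero_le_one) zero_le_one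
  have h0 : φ 0 = f x := by simp [hφ]
  have h1 : φ 1 = f y - ⟪f' x, v⟫ - L / 2 * ‖v‖ ^ 2 := by
    have hxy : x + (1:ℝ) • v = y := by rw [one_smul, hv]; abel
    simp only [hφ, hxy, one_pow, one_mul, mul_one]
  rw [h0, h1] at h01
  linarith

/-- Cocoercivity-type inequality from convexity + quadratic upper bound. -/
lemma my_coco (L' : ℝ) (hL : 0 ≤ L') (g : E → ℝ) (g' : E → E)
    (h1 : ∀ x y, g x + ⟪g' x, y - x⟫ ≤ g y)
    (h2 : ∀ x y, g y ≤ g x + ⟪g' x, y - x⟫ + L' / 2 * ‖y - x‖ ^ 2)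
    (x y : E) : ‖g' y - g' x‖ ^ 2 ≤ L' * ⟪g' y - g' x, y - x⟫ := by
  set Δ : E := g' y - g' x with hΔ
  have key : ∀ t : ℝ, 2 * t * ‖Δ‖ ^ 2 ≤ ⟪Δ, y - x⟫ + L' * t ^ 2 * ‖Δ‖ ^ 2 := by
    intro t
    have hA := h1 x (y - t • Δ)
    have hB := h2 y (y - t • Δ)
    have hC := h1 y (x + t • Δ)
    have hD := h2 x (x + t • Δ)
    have e1 : y - t • Δ - x = y - x - t • Δ := by abel
    have e2 : y - t • Δ - y = -(t • Δ) := by abel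
    have e3 : x + t • Δ - y = -((y - x) - t • Δ) := by abel
    have e4 : x + t • Δ - x = t • Δ := by abel
    rw [e1] at hA; rw [e2] at hB; rw [e3] at hC; rw [e4] at hD
    simp only [inner_sub_right, inner_neg_right, real_inner_smul_right] at hA hB hC hD
    rw [norm_neg] at hB
    have n2 : ‖t • Δ‖ ^ 2 = t ^ 2 * ‖Δ‖ ^ 2 := by
      rw [norm_smul, Real.norm_eq_abs, mul_pow, sq_abs]
    rw [n2] at hB hD
    have hgx : ⟪g' y, Δ⟫ - ⟪g' x, Δ⟫ = ‖Δ‖ ^ 2 := by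
      rw [← inner_sub_left, ← hΔ, real_inner_self_eq_norm_sq]
    have hgxt : t * ⟪g' y, Δ⟫ - t * ⟪g' x, Δ⟫ = t * ‖Δ‖ ^ 2 := by
      rw [← mul_sub, hgx]
    have hsy : (⟪g' y, y⟫ - ⟪g' y, x⟫) - (⟪g' x, y⟫ - ⟪g' x, x⟫) = ⟪Δ, y - x⟫ := by
      rw [hΔ]; simp only [inner_sub_left, inner_sub_right]; ring
    linarith [hA, hB, hC, hD, hgxt, hsy]
  rcases eq_or_lt_of_le hL with hL0 | hLpos
  · rw [← hL0]
    simp only [← hL0, zero_mul, mul_zero, zero_div, add_zero] at key ⊢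
    by_contra hpos
    push_neg at hpos
    set S := ‖Δ‖ ^ 2 with hS
    set A := ⟪Δ, y - x⟫ with hA
    have hSne : S ≠ 0 := ne_of_gt hpos
    have e : 2 * ((A + 1) / (2 * S)) * S = A + 1 := by field_simp
    have := key ((A + 1) / (2 * S))
    rw [e] at this
    linarith
  · have hL'ne : L' ≠ 0 := ne_of_gt hLpos
    have h := mul_le_mul_of_nonneg_left (key L'⁻¹) hLpos.le
    have e2 : L' * (2 * L'⁻¹ * ‖Δ‖ ^ 2) = 2 * ‖Δ‖ ^ 2 := by field_simp
    have e3 : L' * (⟪Δ, y - x⟫ + L' * L'⁻¹ ^ 2 * ‖Δ‖ ^ 2) = L' * ⟪Δ, y - x⟫ + ‖Δ‖ ^ 2 := by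
      field_simp
    rw [e2, e3] at h
    linarith

/-- Coercivity of the gradient of a strongly convex function with Lipschitz gradient. -/
lemma my_coercive (μ L : ℝ) (hμ : 0 < μ) (hμL : μ ≤ L)
    (f : E → ℝ) (f' : E → E)
    (hgrad : ∀ x, HasGradientAt f (f' x) x)
    (hstrong : ∀ x y, f y ≥ f x + ⟪f' x, y - x⟫ + μ / 2 * ‖y - x‖ ^ 2)
    (hlip : ∀ x y, ‖f' x - f' y‖ ≤ L * ‖x - y‖) (x y : E) :
    ‖f' y - f' x‖ ^ 2 + μ * L * ‖y - x‖ ^ 2 ≤ (μ + L) * ⟪f' y - f' x, y - x⟫ := by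
  have hL0 : 0 < L := lt_of_lt_of_le hμ hμL
  set g : E → ℝ := fun z => f z - μ / 2 * ‖z‖ ^ 2 with hg
  set g' : E → E := fun z => f' z - μ • z with hg'
  have hdesc := my_descent L hL0.le f f' hgrad hlip
  have expand : ∀ a b : E, ⟪g' a, b - a⟫ = ⟪f' a, b - a⟫ - μ * ⟪a, b⟫ + μ * ‖a‖ ^ 2 := by
    intro a b
    simp only [hg', inner_sub_left, real_inner_smul_left, inner_sub_right]
    rw [real_inner_self_eq_norm_sq]
    ring
  have nμ : ∀ (c : ℝ) (a b : E), c * ‖b - a‖ ^ 2 = c * ‖b‖ ^ 2 - 2 * c * ⟪a, b⟫ + c * ‖a‖ ^ 2 := by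
    intro c a b
    rw [norm_sub_sq_real, real_inner_comm b a]
    ring
  have hcvx : ∀ a b : E, g a + ⟪g' a, b - a⟫ ≤ g b := by
    intro a b
    have hs := hstrong a b
    rw [nμ (μ / 2) a b] at hs
    simp only [hg]
    rw [expand a b]
    linarith
  have hub : ∀ a b : E, g b ≤ g a + ⟪g' a, b - a⟫ + (L - μ) / 2 * ‖b - a‖ ^ 2 := by
    intro a b
    have hd := hdesc a b
    rw [nμ (L / 2) a b] at hd
    rw [nμ ((L - μ) / 2) a b]
    simp only [hg]
    rw [expand a b]
    linarith
  have hco := my_coco (L - μ) (by linarith) g g' hcvx hub x y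
  have hΔe : g' y - g' x = (f' y - f' x) - μ • (y - x) := by
    simp only [hg', smul_sub]
    abel
  rw [hΔe] at hco
  have e1 : ‖f' y - f' x - μ • (y - x)‖ ^ 2
      = ‖f' y - f' x‖ ^ 2 - 2 * μ * ⟪f' y - f' x, y - x⟫ + μ ^ 2 * ‖y - x‖ ^ 2 := by
    rw [norm_sub_sq_real, real_inner_smul_right, norm_smul, Real.norm_eq_abs, mul_pow, sq_abs]
    ring
  have e2 : ⟪f' y - f' x - μ • (y - x), y - x⟫
      = ⟪f' y - f' x, y - x⟫ - μ * ‖y - x‖ ^ 2 := by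
    rw [inner_sub_left, real_inner_smul_left, real_inner_self_eq_norm_sq]
  rw [e1, e2] at hco
  nlinarith [hco]

end Aux

/-- Gradient descent with the optimal step size ε = 2/(μ+L) on a μ-strongly convex
function with L-Lipschitz gradient contracts with factor (L-μ)/(L+μ) per step. -/
theorem stmt_1 {n : ℕ} (μ L ε : ℝ) (hμ : 0 < μ) (hμL : μ ≤ L)
    (f : EuclideanSpace ℝ (Fin n) → ℝ)
    (f' : EuclideanSpace ℝ (Fin n) → EuclideanSpace ℝ (Fin n))
    (hgrad : ∀ x, HasGradientAt f (f' x) x)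
    (hstrong : ∀ x y, f y ≥ f x + ⟪f' x, y - x⟫ + μ / 2 * ‖y - x‖ ^ 2)
    (hlip : ∀ x y, ‖f' x - f' y‖ ≤ L * ‖x - y‖)
    (xstar : EuclideanSpace ℝ (Fin n)) (hmin : ∀ x, f xstar ≤ f x)
    (hε : ε = 2 / (μ + L))
    (x : ℕ → EuclideanSpace ℝ (Fin n))
    (hx : ∀ k, x (k + 1) = x k - ε • f' (x k)) :
    ∀ k : ℕ, 0 < k → ‖x k - xstar‖ ≤ ((L - μ) / (L + μ)) ^ k * ‖x 0 - xstar‖ := by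
  have hL0 : 0 < L := lt_of_lt_of_le hμ hμL
  have hs : (0:ℝ) < μ + L := by linarith
  have hsne : (μ + L) ≠ 0 := ne_of_gt hs
  have hLμne : (L + μ) ≠ 0 := by intro h; linarith [h]
  have hfstar : f' xstar = 0 := by
    have hloc : IsLocalMin f xstar := Filter.Eventually.of_forall hmin
    have h0 := hloc.hasFDerivAt_eq_zero (hgrad xstar).hasFDerivAt
    have h1 := congrArg (InnerProductSpace.toDual ℝ (EuclideanSpace ℝ (Fin n))).symm h0
    simpa using h1
  set ρ : ℝ := (L - μ) / (L + μ) with hρdef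
  have hρ0 : 0 ≤ ρ := div_nonneg (by linarith) (by linarith)
  have step : ∀ k, ‖x (k + 1) - xstar‖ ≤ ρ * ‖x k - xstar‖ := by
    intro k
    have hco := my_coercive μ L hμ hμL f f' hgrad hstrong hlip xstar (x k)
    rw [hfstar, sub_zero] at hco
    have hxk : x (k + 1) - xstar = (x k - xstar) - ε • f' (x k) := by
      rw [hx k]; abel
    have hsq : ‖(x k - xstar) - ε • f' (x k)‖ ^ 2
        = ‖x k - xstar‖ ^ 2 - 2 * ε * ⟪f' (x k), x k - xstar⟫ + ε ^ 2 * ‖f' (x k)‖ ^ 2 := by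
      rw [norm_sub_sq_real, real_inner_smul_right, norm_smul, Real.norm_eq_abs, mul_pow, sq_abs,
        real_inner_comm (x k - xstar) (f' (x k))]
      ring
    have hsub : ‖(x k - xstar) - ε • f' (x k)‖ ^ 2 ≤ (ρ * ‖x k - xstar‖) ^ 2 := by
      rw [hsq, hε, hρdef, ← sub_nonneg]
      have hrepr : ((L - μ) / (L + μ) * ‖x k - xstar‖) ^ 2
          - (‖x k - xstar‖ ^ 2 - 2 * (2 / (μ + L)) * ⟪f' (x k), x k - xstar⟫
            + (2 / (μ + L)) ^ 2 * ‖f' (x k)‖ ^ 2)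
          = (4 * ((μ + L) * ⟪f' (x k), x k - xstar⟫
              - (‖f' (x k)‖ ^ 2 + μ * L * ‖x k - xstar‖ ^ 2))) / (μ + L) ^ 2 := by
        field_simp
        ring
      rw [hrepr]
      apply div_nonneg _ (by positivity)
      linarith [hco]
    rw [hxk]
    exact le_of_pow_le_pow_left₀ two_ne_zero (mul_nonneg hρ0 (norm_nonneg _)) hsub
  have main : ∀ k, ‖x k - xstar‖ ≤ ρ ^ k * ‖x 0 - xstar‖ := by
    intro k
    induction k with
    | zero => simp
    | succ k ih =>
      calc ‖x (k + 1) - xstar‖ ≤ ρ * ‖x k - xstar‖ := step k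
      _ ≤ ρ * (ρ ^ k * ‖x 0 - xstar‖) := mul_le_mul_of_nonneg_left ih hρ0
      _ = ρ ^ (k + 1) * ‖x 0 - xstar‖ := by ring
  exact fun k _ => main k
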